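/- A non-null real 2-form F on an oriented 4-dimensional Lorentzian vector space has canonical geometry U (i.e. F = e^φ(cos ψ U + sin ψ *U) for some scalars φ, ψ) if and only if its self-dual part ℱ = (1/√2)(F - i*F) is proportional to the self-dual bivector 𝒰 = (1/√2)(U - i*U), if and only if [F, 𝒰] = 0 (commutator of the associated endomorphisms). -/

import Mathlib

noncomputable section

open Complex Matrix

/-- The Levi-Civita epsilon symbol in dimension 4 (ε₀₁₂₃ = 1). -/
def eps4 (a b c d : Fin 4) : ℤ :=
  ∑ σ : Equiv.Perm (Fin 4),
    if σ 0 = a ∧ σ 1 = b ∧ σ 2 = c ∧ σ 3 = d then ((Equiv.Perm.sign σ : ℤˣ) : ℤ) else 0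

/-- The Minkowski metric diag(-1,1,1,1) on a 4-dimensional Lorentzian vector space. -/
def mink {α : Type*} [Ring α] : Matrix (Fin 4) (Fin 4) α :=
  Matrix.diagonal (fun i => if i = 0 then (-1 : α) else 1)

/-- Hodge dual of a 2-form: (∗F)_{ab} = ½ η_{abmn} F^{mn}. -/
def hodge {α : Type*} [Field α] (F : Matrix (Fin 4) (Fin 4) α) : Matrix (Fin 4) (Fin 4) α :=
  Matrix.of fun a b => (1/2 : α) * ∑ m, ∑ n, ((eps4 a b m n : ℤ) : α) * ((mink * F * mink : Matrix (Fin 4) (Fin 4) α) m n)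

/-- Metric product of 2-tensors: (A·B)_{ab} = A_a{}^m B_{mb}. -/
def tdot {α : Type*} [Ring α] (A B : Matrix (Fin 4) (Fin 4) α) : Matrix (Fin 4) (Fin 4) α :=
  A * mink * B

/-- Inner product of 2-forms: (F,H) = ½ F_{ab} H^{ab}. -/
def fpair {α : Type*} [Field α] (F H : Matrix (Fin 4) (Fin 4) α) : α :=
  (1/2 : α) * Matrix.trace (F * mink * Hᵀ * mink)

/-- The self-dual bivector ℱ = (1/√2)(F − i ∗F) associated with a real 2-form F. -/
def sdpart (F : Matrix (Fin 4) (Fin 4) ℝ) : Matrix (Fin 4) (Fin 4) ℂ :=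
  ((Real.sqrt 2 : ℂ))⁻¹ •
    ((F.map (Complex.ofReal)) - Complex.I • hodge (F.map (Complex.ofReal)))

/-!
Self-dual 2-forms make up a complex 3-dimensional space, and in coordinates on it one checks two
identities: a self-dual and an anti-self-dual form commute, and two self-dual forms anticommute up
to the metric, `S·T + T·S = -(S,T) g`. By the first, the commutator of the real form `F` with `𝒰`
only sees the self-dual part `ℱ`. By the second, if `ℱ` commutes with `𝒰` then `𝒰·ℱ` and `𝒰·𝒰`
are multiples of `g`, so `(𝒰,𝒰) ℱ = (ℱ,𝒰) 𝒰`, where `(𝒰,𝒰) = (U,U) - i(U,*U) = -1`.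

For the first equivalence: `F ↦ ℱ` is real-linear and injective, and sends `*U` to `i𝒰`; hence
`ℱ = c𝒰` says exactly `F = Re c · U + Im c · *U`, and since `F ≠ 0` the polar form
`c = e^φ e^{iψ}` gives the canonical form.
-/

def skewMat {α : Type*} [Ring α] (a b c d e f : α) : Matrix (Fin 4) (Fin 4) α :=
  !![0, a, b, c; -a, 0, d, e; -b, -d, 0, f; -c, -e, -f, 0]

theorem eps4_eq_sign (a b c d : Fin 4) :
    eps4 a b c d = ((b:ℤ)-a).sign * ((c:ℤ)-a).sign * ((d:ℤ)-a).sign *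
      ((c:ℤ)-b).sign * ((d:ℤ)-b).sign * ((d:ℤ)-c).sign := by
  revert a b c d; decide

theorem eps4_swap (a b c d : Fin 4) : eps4 b a c d = -eps4 a b c d := by
  revert a b c d; decide

theorem mink_mul_skewMat_mul_mink {α : Type*} [Ring α] (a b c d e f : α) :
    mink * skewMat a b c d e f * mink = skewMat (-a) (-b) (-c) d e f := by
  ext i j
  fin_cases i <;> fin_cases j <;> simp [skewMat, mink, Matrix.mul_apply, Fin.sum_univ_four]

set_option maxHeartbeats 2000000 in
theorem hodge_skewMat {α : Type*} [Field α] [CharZero α] (a b c d e f : α) :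
    hodge (skewMat a b c d e f) = skewMat f (-e) d (-c) b (-a) := by
  rw [hodge, mink_mul_skewMat_mul_mink]
  ext i j
  fin_cases i <;> fin_cases j <;>
    simp [eps4_eq_sign, skewMat, Fin.sum_univ_four, Int.sign_eq_one_of_pos,
      Int.sign_eq_neg_one_of_neg] <;> ring

theorem eq_skewMat_of_transpose_eq_neg {α : Type*} [Ring α] [NoZeroDivisors α] [CharZero α]
    {M : Matrix (Fin 4) (Fin 4) α} (h : Mᵀ = -M) : M = skewMat (M 0 1) (M 0 2) (M 0 3) (M 1 2) (M 1 3) (M 2 3) := by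
  have hM : ∀ i j, M j i = -M i j := fun i j => congrFun (congrFun h i) j
  have hd : ∀ i, M i i = 0 := fun i => self_eq_neg.mp (hM i i)
  ext i j
  fin_cases i <;> fin_cases j <;> simp [skewMat, hd, hM 0 1, hM 0 2, hM 0 3, hM 1 2, hM 1 3, hM 2 3]

theorem fpair_skewMat {α : Type*} [Field α] [CharZero α] (a b c d e f a' b' c' d' e' f' : α) :
    fpair (skewMat a b c d e f) (skewMat a' b' c' d' e' f') =
      -(a*a') - b*b' - c*c' + d*d' + e*e' + f*f' := by
  simp only [fpair, Matrix.trace, Matrix.diag, Matrix.mul_apply, Fin.sum_univ_four]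
  simp [skewMat, mink]
  ring

theorem skewMat_mul_mink {α : Type*} [Ring α] (a b c d e f : α) :
    skewMat a b c d e f * mink = !![0, a, b, c; a, 0, d, e; b, -d, 0, f; c, -e, -f, 0] := by
  ext i j
  fin_cases i <;> fin_cases j <;> simp [skewMat, mink, Matrix.mul_apply, Fin.sum_univ_four]

theorem tdot_skewMat {α : Type*} [CommRing α] (p₁ p₂ p₃ p₄ p₅ p₆ q₁ q₂ q₃ q₄ q₅ q₆ : α) :
    tdot (skewMat p₁ p₂ p₃ p₄ p₅ p₆) (skewMat q₁ q₂ q₃ q₄ q₅ q₆) =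
    !![-p₁*q₁-p₂*q₂-p₃*q₃, -p₂*q₄-p₃*q₅, p₁*q₄-p₃*q₆, p₁*q₅+p₂*q₆;
      -p₄*q₂-p₅*q₃, p₁*q₁-p₄*q₄-p₅*q₅, p₁*q₂-p₅*q₆, p₁*q₃+p₄*q₆;
      p₄*q₁-p₆*q₃, p₂*q₁-p₆*q₅, p₂*q₂-p₄*q₄-p₆*q₆, p₂*q₃-p₄*q₅;
      p₅*q₁+p₆*q₂, p₃*q₁+p₆*q₄, p₃*q₂-p₅*q₄, p₃*q₃-p₅*q₅-p₆*q₆] := by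
  rw [tdot, skewMat_mul_mink]
  ext i j
  fin_cases i <;> fin_cases j <;>
    simp [skewMat, Matrix.mul_apply, Fin.sum_univ_four] <;> ring

theorem transpose_hodge {α : Type*} [Field α] (M : Matrix (Fin 4) (Fin 4) α) :
    (hodge M)ᵀ = -hodge M := by
  ext i j
  simp only [hodge, Matrix.transpose_apply, Matrix.neg_apply, Matrix.of_apply, eps4_swap j i,
    Int.cast_neg, neg_mul, Finset.sum_neg_distrib, mul_neg, neg_neg]

theorem hodge_add {α : Type*} [Field α] (X Y : Matrix (Fin 4) (Fin 4) α) :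
    hodge (X + Y) = hodge X + hodge Y := by
  ext i j
  simp [hodge, Matrix.add_mul, mul_add, Finset.sum_add_distrib]

theorem hodge_sub {α : Type*} [Field α] (X Y : Matrix (Fin 4) (Fin 4) α) :
    hodge (X - Y) = hodge X - hodge Y := by
  ext i j
  simp [hodge, Matrix.sub_mul, mul_sub, Finset.sum_sub_distrib]

theorem hodge_smul {α : Type*} [Field α] (x : α) (X : Matrix (Fin 4) (Fin 4) α) :
    hodge (x • X) = x • hodge X := by
  ext i j
  simp [hodge, Finset.mul_sum, mul_left_comm]

theorem mink_map {α β : Type*} [Ring α] [Ring β] (f : α →+* β) :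
    (mink : Matrix (Fin 4) (Fin 4) α).map f = mink := by
  ext i j
  fin_cases i <;> fin_cases j <;> simp [mink]

theorem hodge_map {α β : Type*} [Field α] [Field β] (f : α →+* β) (X : Matrix (Fin 4) (Fin 4) α) :
    hodge (X.map f) = (hodge X).map f := by
  ext i j
  simp only [hodge, Matrix.of_apply, Matrix.map_apply, ← mink_map f, ← Matrix.map_mul, map_mul,
    map_sum, map_intCast, map_div₀, map_one, map_ofNat]

theorem hodge_map_ofReal (F : Matrix (Fin 4) (Fin 4) ℝ) :
    hodge (F.map ofReal) = (hodge F).map ofReal :=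
  hodge_map ofRealHom F

theorem hodge_hodge {α : Type*} [Field α] [CharZero α] {X : Matrix (Fin 4) (Fin 4) α}
    (hX : Xᵀ = -X) : hodge (hodge X) = -X := by
  rw [eq_skewMat_of_transpose_eq_neg hX, hodge_skewMat, hodge_skewMat]
  ext i j
  fin_cases i <;> fin_cases j <;> simp [skewMat]

section tdot

variable {α : Type*} [CommRing α]

theorem mink_mul_mink : (mink * mink : Matrix (Fin 4) (Fin 4) α) = 1 := by
  ext i j
  fin_cases i <;> fin_cases j <;> simp [mink]

theorem tdot_mink (A : Matrix (Fin 4) (Fin 4) α) : tdot A mink = A := by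
  rw [tdot, Matrix.mul_assoc, mink_mul_mink, Matrix.mul_one]

theorem mink_tdot (A : Matrix (Fin 4) (Fin 4) α) : tdot mink A = A := by
  rw [tdot, mink_mul_mink, Matrix.one_mul]

theorem tdot_assoc (A B C : Matrix (Fin 4) (Fin 4) α) :
    tdot (tdot A B) C = tdot A (tdot B C) := by
  simp only [tdot, Matrix.mul_assoc]

theorem tdot_smul_left (x : α) (A B : Matrix (Fin 4) (Fin 4) α) :
    tdot (x • A) B = x • tdot A B := by
  simp only [tdot, Matrix.smul_mul]

theorem tdot_smul_right (x : α) (A B : Matrix (Fin 4) (Fin 4) α) :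
    tdot A (x • B) = x • tdot A B := by
  simp only [tdot, Matrix.mul_smul]

theorem tdot_add_left (A B C : Matrix (Fin 4) (Fin 4) α) :
    tdot (A + B) C = tdot A C + tdot B C := by
  simp only [tdot, Matrix.add_mul]

theorem tdot_add_right (A B C : Matrix (Fin 4) (Fin 4) α) :
    tdot A (B + C) = tdot A B + tdot A C := by
  simp only [tdot, Matrix.mul_add]

end tdot

def selfDualMat (a b c : ℂ) : Matrix (Fin 4) (Fin 4) ℂ :=
  skewMat a b c (I * c) (-(I * b)) (I * a)

def antiSelfDualMat (a b c : ℂ) : Matrix (Fin 4) (Fin 4) ℂ :=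
  skewMat a b c (-(I * c)) (I * b) (-(I * a))

theorem tdot_selfDualMat_add_tdot_selfDualMat (a b c a' b' c' : ℂ) :
    tdot (selfDualMat a b c) (selfDualMat a' b' c') +
      tdot (selfDualMat a' b' c') (selfDualMat a b c) =
      (2 * (a * a' + b * b' + c * c')) • mink := by
  rw [selfDualMat, selfDualMat, tdot_skewMat, tdot_skewMat]
  ext i j
  fin_cases i <;> fin_cases j <;> simp [mink] <;> ring_nf <;> simp only [I_sq] <;> ring

theorem tdot_antiSelfDualMat_comm (a b c a' b' c' : ℂ) :
    tdot (antiSelfDualMat a b c) (selfDualMat a' b' c') =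
      tdot (selfDualMat a' b' c') (antiSelfDualMat a b c) := by
  rw [selfDualMat, antiSelfDualMat, tdot_skewMat, tdot_skewMat]
  ext i j
  fin_cases i <;> fin_cases j <;> simp <;> ring_nf <;> simp only [I_sq] <;> ring

theorem fpair_selfDualMat (a b c a' b' c' : ℂ) :
    fpair (selfDualMat a b c) (selfDualMat a' b' c') = -2 * (a * a' + b * b' + c * c') := by
  rw [selfDualMat, selfDualMat, fpair_skewMat]
  linear_combination (a * a' + b * b' + c * c') * I_sq

def IsSelfDual (S : Matrix (Fin 4) (Fin 4) ℂ) : Prop := hodge S = I • S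

def IsAntiSelfDual (A : Matrix (Fin 4) (Fin 4) ℂ) : Prop := hodge A = -I • A

theorem IsSelfDual.transpose_eq_neg {S : Matrix (Fin 4) (Fin 4) ℂ} (hS : IsSelfDual S) :
    Sᵀ = -S := by
  have : S = -I • hodge S := by rw [hS, smul_smul]; simp
  rw [this, Matrix.transpose_smul, transpose_hodge, smul_neg]

theorem IsAntiSelfDual.transpose_eq_neg {A : Matrix (Fin 4) (Fin 4) ℂ} (hA : IsAntiSelfDual A) :
    Aᵀ = -A := by
  have : A = I • hodge A := by rw [hA, smul_smul]; simp
  rw [this, Matrix.transpose_smul, transpose_hodge, smul_neg]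

theorem IsSelfDual.eq_selfDualMat {S : Matrix (Fin 4) (Fin 4) ℂ} (hS : IsSelfDual S) :
    S = selfDualMat (S 0 1) (S 0 2) (S 0 3) := by
  have hcoord := eq_skewMat_of_transpose_eq_neg hS.transpose_eq_neg
  have h := hS
  rw [IsSelfDual, hcoord, hodge_skewMat] at h
  have h12 := congrFun (congrFun h 1) 2
  have h13 := congrFun (congrFun h 1) 3
  have h23 := congrFun (congrFun h 2) 3
  simp only [skewMat, of_apply, cons_val', cons_val, cons_val_fin_one, cons_val_one, cons_val_zero,
    Matrix.smul_apply, smul_eq_mul, neg_neg] at h12 h13 h23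
  refine hcoord.trans ?_
  rw [selfDualMat]
  congr 1
  · linear_combination I * h12 + S 1 2 * I_sq
  · linear_combination I * h13 + S 1 3 * I_sq
  · linear_combination I * h23 + S 2 3 * I_sq

theorem IsAntiSelfDual.eq_antiSelfDualMat {A : Matrix (Fin 4) (Fin 4) ℂ} (hA : IsAntiSelfDual A) :
    A = antiSelfDualMat (A 0 1) (A 0 2) (A 0 3) := by
  have hcoord := eq_skewMat_of_transpose_eq_neg hA.transpose_eq_neg
  have h := hA
  rw [IsAntiSelfDual, hcoord, hodge_skewMat] at h
  have h12 := congrFun (congrFun h 1) 2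
  have h13 := congrFun (congrFun h 1) 3
  have h23 := congrFun (congrFun h 2) 3
  simp only [skewMat, of_apply, cons_val', cons_val, cons_val_fin_one, cons_val_one, cons_val_zero,
    Matrix.smul_apply, smul_eq_mul, neg_neg, neg_mul, neg_inj] at h12 h13 h23
  refine hcoord.trans ?_
  rw [antiSelfDualMat]
  congr 1
  · linear_combination I * h12 + A 1 2 * I_sq
  · linear_combination -I * h13 + A 1 3 * I_sq
  · linear_combination I * h23 + A 2 3 * I_sq

theorem IsSelfDual.tdot_add_tdot {S T : Matrix (Fin 4) (Fin 4) ℂ} (hS : IsSelfDual S)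
    (hT : IsSelfDual T) : tdot S T + tdot T S = -fpair S T • mink := by
  rw [hS.eq_selfDualMat, hT.eq_selfDualMat, tdot_selfDualMat_add_tdot_selfDualMat,
    fpair_selfDualMat]
  congr 1
  ring

theorem IsAntiSelfDual.tdot_comm {A S : Matrix (Fin 4) (Fin 4) ℂ} (hA : IsAntiSelfDual A)
    (hS : IsSelfDual S) : tdot A S = tdot S A := by
  rw [hA.eq_antiSelfDualMat, hS.eq_selfDualMat, tdot_antiSelfDualMat_comm]

theorem IsSelfDual.exists_eq_smul_iff_tdot_comm {S T : Matrix (Fin 4) (Fin 4) ℂ}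
    (hS : IsSelfDual S) (hT : IsSelfDual T) (hT₀ : fpair T T ≠ 0) :
    (∃ c : ℂ, S = c • T) ↔ tdot S T = tdot T S := by
  refine ⟨fun ⟨c, hc⟩ => by rw [hc, tdot_smul_left, tdot_smul_right], fun h => ?_⟩
  have hTT : (2 : ℂ) • tdot T T = -fpair T T • mink := by
    rw [two_smul]; exact hT.tdot_add_tdot hT
  have hTS : (2 : ℂ) • tdot T S = -fpair S T • mink := by
    rw [two_smul]; nth_rw 1 [← h]; exact hS.tdot_add_tdot hT
  have key : fpair T T • S = fpair S T • T := by
    rw [← neg_inj, ← neg_smul, ← neg_smul]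
    -- `T·T` and `T·S` are both multiples of the metric, so associativity compares `S` with `T`.
    calc -fpair T T • S = tdot ((2 : ℂ) • tdot T T) S := by rw [hTT, tdot_smul_left, mink_tdot]
      _ = tdot T ((2 : ℂ) • tdot T S) := by rw [tdot_smul_left, tdot_smul_right, tdot_assoc]
      _ = -fpair S T • T := by rw [hTS, tdot_smul_right, tdot_mink]
  refine ⟨fpair S T / fpair T T, ?_⟩
  rw [div_eq_inv_mul, mul_smul, ← key, inv_smul_smul₀ hT₀]

theorem inv_sqrt_two_mul_inv_sqrt_two : (Real.sqrt 2 : ℂ)⁻¹ * (Real.sqrt 2 : ℂ)⁻¹ = 2⁻¹ := by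
  rw [← mul_inv, ← ofReal_mul, Real.mul_self_sqrt zero_le_two, ofReal_ofNat]

def asdpart (F : Matrix (Fin 4) (Fin 4) ℝ) : Matrix (Fin 4) (Fin 4) ℂ :=
  (Real.sqrt 2 : ℂ)⁻¹ • ((F.map ofReal) + I • hodge (F.map ofReal))

theorem hodge_sdpart (F : Matrix (Fin 4) (Fin 4) ℝ) : hodge (sdpart F) = sdpart (hodge F) := by
  rw [sdpart, sdpart, hodge_smul, hodge_sub, hodge_smul, hodge_map_ofReal]

theorem isSelfDual_sdpart {F : Matrix (Fin 4) (Fin 4) ℝ} (hF : Fᵀ = -F) :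
    IsSelfDual (sdpart F) := by
  rw [IsSelfDual, hodge_sdpart]
  simp only [sdpart, hodge_map_ofReal, hodge_hodge hF, Matrix.map_neg _ ofReal_neg]
  linear_combination (norm := module) I_mul_I • ((Real.sqrt 2 : ℂ)⁻¹ • (hodge F).map ofReal)

theorem isAntiSelfDual_asdpart {F : Matrix (Fin 4) (Fin 4) ℝ} (hF : Fᵀ = -F) :
    IsAntiSelfDual (asdpart F) := by
  rw [IsAntiSelfDual, asdpart, hodge_smul, hodge_add, hodge_smul]
  simp only [hodge_map_ofReal, hodge_hodge hF, Matrix.map_neg _ ofReal_neg]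
  linear_combination (norm := module) I_mul_I • ((Real.sqrt 2 : ℂ)⁻¹ • (hodge F).map ofReal)

theorem map_ofReal_eq_sdpart_add_asdpart (F : Matrix (Fin 4) (Fin 4) ℝ) :
    F.map ofReal = (Real.sqrt 2 : ℂ)⁻¹ • (sdpart F + asdpart F) := by
  rw [sdpart, asdpart, ← smul_add, sub_add_add_cancel, ← two_smul ℂ, smul_smul, smul_smul,
    inv_sqrt_two_mul_inv_sqrt_two, inv_mul_cancel₀ two_ne_zero, one_smul]

theorem tdot_map_ofReal_sub_tdot {F : Matrix (Fin 4) (Fin 4) ℝ} {S : Matrix (Fin 4) (Fin 4) ℂ}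
    (hF : Fᵀ = -F) (hS : IsSelfDual S) :
    tdot (F.map ofReal) S - tdot S (F.map ofReal) =
      (Real.sqrt 2 : ℂ)⁻¹ • (tdot (sdpart F) S - tdot S (sdpart F)) := by
  rw [map_ofReal_eq_sdpart_add_asdpart, tdot_smul_left, tdot_smul_right, tdot_add_left,
    tdot_add_right, (isAntiSelfDual_asdpart hF).tdot_comm hS, ← smul_sub]
  abel_nf

theorem sdpart_add (F G : Matrix (Fin 4) (Fin 4) ℝ) : sdpart (F + G) = sdpart F + sdpart G := by
  rw [sdpart, sdpart, sdpart, Matrix.map_add _ ofReal_add, hodge_add]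
  module

theorem sdpart_smul (r : ℝ) (F : Matrix (Fin 4) (Fin 4) ℝ) :
    sdpart (r • F) = (r : ℂ) • sdpart F := by
  have : (r • F).map ofReal = (r : ℂ) • F.map ofReal := by ext; simp
  rw [sdpart, sdpart, this, hodge_smul]
  module

theorem sdpart_hodge {F : Matrix (Fin 4) (Fin 4) ℝ} (hF : Fᵀ = -F) :
    sdpart (hodge F) = I • sdpart F := by
  rw [← hodge_sdpart, isSelfDual_sdpart hF]

theorem map_re_sdpart (F : Matrix (Fin 4) (Fin 4) ℝ) :
    (sdpart F).map re = (Real.sqrt 2)⁻¹ • F := by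
  ext i j
  simp [sdpart, hodge_map_ofReal, ← ofReal_inv]

theorem sdpart_injective : Function.Injective sdpart := by
  intro F G h
  have := congrArg (Matrix.map · re) h
  simp only [map_re_sdpart] at this
  exact smul_right_injective _ (by positivity) this

def HasCanonicalGeometry (F U : Matrix (Fin 4) (Fin 4) ℝ) : Prop :=
  ∃ φ ψ : ℝ, F = Real.exp φ • (Real.cos ψ • U + Real.sin ψ • hodge U)

theorem sdpart_re_smul_add_im_smul_hodge {U : Matrix (Fin 4) (Fin 4) ℝ} (hU : Uᵀ = -U) (c : ℂ) :
    sdpart (c.re • U + c.im • hodge U) = c • sdpart U := by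
  rw [sdpart_add, sdpart_smul, sdpart_smul, sdpart_hodge hU, smul_smul, ← add_smul,
    re_add_im]

theorem hasCanonicalGeometry_iff_exists_sdpart_eq_smul {F U : Matrix (Fin 4) (Fin 4) ℝ}
    (hU : Uᵀ = -U) (hF₀ : F ≠ 0) :
    HasCanonicalGeometry F U ↔ ∃ c : ℂ, sdpart F = c • sdpart U := by
  constructor
  · rintro ⟨φ, ψ, rfl⟩
    refine ⟨⟨Real.exp φ * Real.cos ψ, Real.exp φ * Real.sin ψ⟩, ?_⟩
    rw [← sdpart_re_smul_add_im_smul_hodge hU, smul_add, smul_smul, smul_smul]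
  · rintro ⟨c, hc⟩
    have hF : F = c.re • U + c.im • hodge U :=
      sdpart_injective (hc.trans (sdpart_re_smul_add_im_smul_hodge hU c).symm)
    have hc₀ : c ≠ 0 := by
      rintro rfl
      exact hF₀ (by simpa using hF)
    refine ⟨Real.log ‖c‖, arg c, ?_⟩
    rw [Real.exp_log (norm_pos_iff.mpr hc₀), smul_add, smul_smul, smul_smul, norm_mul_cos_arg,
      norm_mul_sin_arg, hF]

theorem fpair_smul_smul {α : Type*} [Field α] (x y : α) (X Y : Matrix (Fin 4) (Fin 4) α) :
    fpair (x • X) (y • Y) = x * y * fpair X Y := by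
  simp only [fpair, Matrix.transpose_smul, Matrix.smul_mul, Matrix.mul_smul, Matrix.trace_smul,
    smul_eq_mul]
  ring

theorem sdpart_skewMat (a b c d e f : ℝ) :
    sdpart (skewMat a b c d e f) =
      (Real.sqrt 2 : ℂ)⁻¹ • selfDualMat (a - I * f) (b + I * e) (c - I * d) := by
  have hmap : (skewMat a b c d e f).map ofReal = skewMat (a : ℂ) b c d e f := by
    ext i j; fin_cases i <;> fin_cases j <;> simp [skewMat]
  rw [sdpart, hmap, hodge_skewMat]
  congr 1
  ext i j
  fin_cases i <;> fin_cases j <;> simp [skewMat, selfDualMat] <;> ring_nf <;> simp [I_sq]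

theorem fpair_sdpart_self {U : Matrix (Fin 4) (Fin 4) ℝ} (hU : Uᵀ = -U) :
    fpair (sdpart U) (sdpart U) = ((fpair U U : ℝ) : ℂ) - I * ((fpair U (hodge U) : ℝ) : ℂ) := by
  obtain ⟨a, b, c, d, e, f, rfl⟩ : ∃ a b c d e f, U = skewMat a b c d e f :=
    ⟨_, _, _, _, _, _, eq_skewMat_of_transpose_eq_neg hU⟩
  rw [sdpart_skewMat, fpair_smul_smul, fpair_selfDualMat, hodge_skewMat, fpair_skewMat,
    fpair_skewMat, inv_sqrt_two_mul_inv_sqrt_two]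
  push_cast
  linear_combination -(d ^ 2 + e ^ 2 + f ^ 2 : ℂ) * I_sq

/-- a non-null real 2-form F has canonical geometry U iff its self-dual
part ℱ is proportional to 𝒰, iff [F,𝒰] = 0. -/
theorem stmt17 (U F : Matrix (Fin 4) (Fin 4) ℝ) (hU : Uᵀ = -U) (hF : Fᵀ = -F)
    (hUnit : fpair U U = -1) (hSimple : fpair U (hodge U) = 0)
    (hNonNull : ¬(fpair F F = 0 ∧ fpair F (hodge F) = 0)) :
    ((∃ φ ψ : ℝ, F = Real.exp φ • (Real.cos ψ • U + Real.sin ψ • hodge U)) ↔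
      (∃ c : ℂ, sdpart F = c • sdpart U)) ∧
    ((∃ c : ℂ, sdpart F = c • sdpart U) ↔
      tdot (F.map Complex.ofReal) (sdpart U) - tdot (sdpart U) (F.map Complex.ofReal) = 0) := by
  have hF₀ : F ≠ 0 := by
    rintro rfl
    exact hNonNull ⟨by simp [fpair], by simp [fpair]⟩
  have hU₀ : fpair (sdpart U) (sdpart U) ≠ 0 := by
    rw [fpair_sdpart_self hU, hUnit, hSimple]; simp
  refine ⟨hasCanonicalGeometry_iff_exists_sdpart_eq_smul hU hF₀, ?_⟩
  rw [(isSelfDual_sdpart hF).exists_eq_smul_iff_tdot_comm (isSelfDual_sdpart hU) hU₀,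
    tdot_map_ofReal_sub_tdot hF (isSelfDual_sdpart hU), smul_eq_zero, sub_eq_zero]
  simp
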